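/- Let a < b be reals and let U_n be an (n+1)-dimensional subspace of C^n([a,b],ℝ). If {p_{n,0},…,p_{n,n}} and {r_{n,0},…,r_{n,n}} are two non-negative Bernstein bases of U_n, then for each k there exists a positive scalar λ_k > 0 with r_{n,k} = λ_k p_{n,k}. Consequently, U_n has at most one normalized Bernstein basis (a non-negative Bernstein basis whose members sum to the constant function 1). -/

import Mathlib

open Set Filter Topology

noncomputable section

/-- `p k`, `k = 0, …, n`, is a Bernstein basis of the `(n+1)`-dimensional subspace `U` of
`C^n([a,b], ℝ)`: it is a basis of `U` and each `p k` has a zero of order `k` at `a`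
(derivatives of order `< k` vanish at `a`, the `k`-th does not) and a zero of order
`n - k` at `b`. -/
def IsBernsteinBasisOf (a b : ℝ) (n : ℕ) (U : Submodule ℝ (ℝ → ℝ))
    (p : Fin (n + 1) → ℝ → ℝ) : Prop :=
  (∀ k, p k ∈ U) ∧ LinearIndependent ℝ p ∧ Submodule.span ℝ (Set.range p) = U ∧
  ∀ k : Fin (n + 1),
    (∀ j : ℕ, j < (k : ℕ) → iteratedDeriv j (p k) a = 0) ∧
    iteratedDeriv (k : ℕ) (p k) a ≠ 0 ∧
    (∀ j : ℕ, j < n - (k : ℕ) → iteratedDeriv j (p k) b = 0) ∧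
    iteratedDeriv (n - (k : ℕ)) (p k) b ≠ 0

/-- `q k`, `k = 0, …, n-1`, is a Bernstein basis of the `n`-dimensional space
`D_{f₀}U = { (f/f₀)' : f ∈ U }`: every `q k` lies in `D_{f₀}U`, every element of `D_{f₀}U`
lies in the span of the `q k`, the family is linearly independent, and each `q k` has a zero
of order `k` at `a` and a zero of order `n - 1 - k` at `b`. -/
def IsBernsteinBasisOfD (a b : ℝ) (n : ℕ) (f₀ : ℝ → ℝ) (U : Submodule ℝ (ℝ → ℝ))
    (q : Fin n → ℝ → ℝ) : Prop :=
  (∀ k, ∃ f ∈ U, q k = deriv (fun x => f x / f₀ x)) ∧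
  (∀ f ∈ U, deriv (fun x => f x / f₀ x) ∈ Submodule.span ℝ (Set.range q)) ∧
  LinearIndependent ℝ q ∧
  ∀ k : Fin n,
    (∀ j : ℕ, j < (k : ℕ) → iteratedDeriv j (q k) a = 0) ∧
    iteratedDeriv (k : ℕ) (q k) a ≠ 0 ∧
    (∀ j : ℕ, j < n - 1 - (k : ℕ) → iteratedDeriv j (q k) b = 0) ∧
    iteratedDeriv (n - 1 - (k : ℕ)) (q k) b ≠ 0


/-!
Expand `r k = ∑ i, c i • p i`. Differentiating `j` times at `a`, the vanishing orders of the
`p i` make the system triangular, so the zero of order `k` of `r k` at `a` forces `c i = 0` for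
`i < k`; symmetrically the zero of order `n - k` at `b` forces `c i = 0` for `i > k`. Hence
`r k = c k • p k`, with `c k ≠ 0` by linear independence and `c k > 0` because `p k` and `r k`
are non-negative and `p k` is positive somewhere on `[a, b]`. If both bases sum to `1` and
`r i = λ i • p i`, then `∑ i, (λ i - 1) • p i` vanishes on `[a, b]`, so all its derivatives at
`a` of order `≤ n` vanish, and the same triangularity gives `λ i = 1`.
-/

theorem iteratedDeriv_eq_zero_of_eqOn_Icc {f : ℝ → ℝ} {a b x : ℝ} {j : ℕ} (hab : a < b)
    (hf : ContDiffAt ℝ j f x) (h0 : EqOn f 0 (Icc a b)) (hx : x ∈ Icc a b) :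
    iteratedDeriv j f x = 0 := by
  rw [← iteratedDerivWithin_eq_iteratedDeriv (uniqueDiffOn_Icc hab) hf hx,
    iteratedDerivWithin_congr h0 hx, iteratedDerivWithin_const_zero]

theorem exists_pos_of_iteratedDeriv_ne_zero {f : ℝ → ℝ} {a b : ℝ} {k : ℕ} (hab : a < b)
    (hf : ContDiffAt ℝ k f a) (hnn : ∀ x ∈ Icc a b, 0 ≤ f x) (hk : iteratedDeriv k f a ≠ 0) :
    ∃ x ∈ Icc a b, 0 < f x := by
  by_contra! hle
  exact hk <| iteratedDeriv_eq_zero_of_eqOn_Icc hab hf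
    (fun x hx => le_antisymm (hle x hx) (hnn x hx)) (left_mem_Icc.2 hab.le)

theorem coeff_eq_zero_of_iteratedDeriv_sum_eq_zero {𝕜 ι : Type*} [NontriviallyNormedField 𝕜]
    [Fintype ι] {p : ι → 𝕜 → 𝕜} {x : 𝕜} {N K : ℕ} (ord : ι → ℕ) (hord : Function.Injective ord)
    (hp : ∀ i, ContDiffAt 𝕜 N (p i) x) (hK : K ≤ N + 1)
    (hzero : ∀ i, ∀ j < ord i, iteratedDeriv j (p i) x = 0)
    (hord_ne : ∀ i, iteratedDeriv (ord i) (p i) x ≠ 0) (c : ι → 𝕜)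
    (hsum : ∀ j < K, iteratedDeriv j (∑ i, c i • p i) x = 0) (i : ι) (hi : ord i < K) :
    c i = 0 := by
  induction hm : ord i using Nat.strong_induction_on generalizing i with
  | _ m ih =>
    subst hm
    have hterm : ∀ l, l ≠ i → c l * iteratedDeriv (ord i) (p l) x = 0 := by
      intro l hli
      rcases lt_or_gt_of_ne (hord.ne hli) with hlt | hgt
      · rw [ih (ord l) hlt l (hlt.trans hi) rfl, zero_mul]
      · rw [hzero l _ hgt, mul_zero]
    have hdiff : ∀ l ∈ Finset.univ, ContDiffAt 𝕜 (ord i) (p l) x :=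
      fun l _ => (hp l).of_le (by exact_mod_cast Nat.lt_succ_iff.1 (hi.trans_le hK))
    have hder := hsum (ord i) hi
    rw [iteratedDeriv_sum (f := fun l => c l • p l)
      fun l hl => (hdiff l hl).const_smul (c l)] at hder
    simp only [iteratedDeriv_const_smul_field, smul_eq_mul] at hder
    rw [Finset.sum_eq_single i (fun l _ => hterm l) (by simp)] at hder
    exact (mul_eq_zero.1 hder).resolve_right (hord_ne i)

namespace IsBernsteinBasisOf

variable {a b : ℝ} {n : ℕ} {U : Submodule ℝ (ℝ → ℝ)} {p : Fin (n + 1) → ℝ → ℝ}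

theorem coeff_eq_zero_of_lt (hp : IsBernsteinBasisOf a b n U p)
    (hU : ∀ f ∈ U, ContDiff ℝ n f) (c : Fin (n + 1) → ℝ) {K : ℕ} (hK : K ≤ n + 1)
    (hsum : ∀ j < K, iteratedDeriv j (∑ i, c i • p i) a = 0) (i : Fin (n + 1))
    (hi : (i : ℕ) < K) : c i = 0 :=
  coeff_eq_zero_of_iteratedDeriv_sum_eq_zero Fin.val Fin.val_injective
    (fun i => (hU _ (hp.1 i)).contDiffAt) hK (fun i => (hp.2.2.2 i).1)
    (fun i => (hp.2.2.2 i).2.1) c hsum i hi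

theorem coeff_eq_zero_of_gt (hp : IsBernsteinBasisOf a b n U p)
    (hU : ∀ f ∈ U, ContDiff ℝ n f) (c : Fin (n + 1) → ℝ) {K : ℕ}
    (hsum : ∀ j < n - K, iteratedDeriv j (∑ i, c i • p i) b = 0) (i : Fin (n + 1))
    (hi : K < i) : c i = 0 :=
  coeff_eq_zero_of_iteratedDeriv_sum_eq_zero (fun i : Fin (n + 1) => n - (i : ℕ))
    (fun i j hij => Fin.ext (by simp only at hij; omega))
    (fun i => (hU _ (hp.1 i)).contDiffAt) (by omega)
    (fun i => (hp.2.2.2 i).2.2.1) (fun i => (hp.2.2.2 i).2.2.2) c hsum i (by omega)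

theorem exists_eq_smul (hp : IsBernsteinBasisOf a b n U p) (hU : ∀ f ∈ U, ContDiff ℝ n f)
    {f : ℝ → ℝ} (hf : f ∈ U) {k : Fin (n + 1)} (ha : ∀ j < (k : ℕ), iteratedDeriv j f a = 0)
    (hb : ∀ j < n - k, iteratedDeriv j f b = 0) : ∃ c : ℝ, f = c • p k := by
  rw [← hp.2.2.1] at hf
  obtain ⟨c, rfl⟩ := (Submodule.mem_span_range_iff_exists_fun ℝ).1 hf
  refine ⟨c k, Fintype.sum_eq_single k fun i hik => ?_⟩
  rcases lt_or_gt_of_ne (Fin.val_ne_of_ne hik) with hlt | hgt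
  · rw [hp.coeff_eq_zero_of_lt hU c (by omega) ha i hlt, zero_smul]
  · rw [hp.coeff_eq_zero_of_gt hU c hb i hgt, zero_smul]

theorem exists_pos_smul_eq {r : Fin (n + 1) → ℝ → ℝ} (hp : IsBernsteinBasisOf a b n U p)
    (hr : IsBernsteinBasisOf a b n U r) (hU : ∀ f ∈ U, ContDiff ℝ n f) (hab : a < b)
    (hpnn : ∀ k, ∀ x ∈ Icc a b, 0 ≤ p k x) (hrnn : ∀ k, ∀ x ∈ Icc a b, 0 ≤ r k x)
    (k : Fin (n + 1)) : ∃ lam : ℝ, 0 < lam ∧ r k = lam • p k := by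
  obtain ⟨lam, hlam⟩ := hp.exists_eq_smul hU (hr.1 k) (hr.2.2.2 k).1 (hr.2.2.2 k).2.2.1
  have hne : lam ≠ 0 := by
    rintro rfl
    exact hr.2.1.ne_zero k (by simpa using hlam)
  obtain ⟨x, hx, hpos⟩ := exists_pos_of_iteratedDeriv_ne_zero hab
    ((hU _ (hp.1 k)).contDiffAt.of_le (by exact_mod_cast k.is_le)) (hpnn k) (hp.2.2.2 k).2.1
  have hmul : 0 ≤ lam * p k x := by simpa [hlam] using hrnn k x hx
  exact ⟨lam, (nonneg_of_mul_nonneg_left hmul hpos).lt_of_ne' hne, hlam⟩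

theorem coeff_eq_zero_of_eqOn_zero (hp : IsBernsteinBasisOf a b n U p)
    (hU : ∀ f ∈ U, ContDiff ℝ n f) (hab : a < b) (c : Fin (n + 1) → ℝ)
    (h0 : EqOn (∑ i, c i • p i) 0 (Icc a b)) : c = 0 := by
  have hmem : ∑ i, c i • p i ∈ U := U.sum_mem fun i _ => U.smul_mem (c i) (hp.1 i)
  funext i
  refine hp.coeff_eq_zero_of_lt hU c le_rfl (fun j hj => ?_) i i.isLt
  exact iteratedDeriv_eq_zero_of_eqOn_Icc hab
    ((hU _ hmem).contDiffAt.of_le (by exact_mod_cast Nat.lt_succ_iff.1 hj)) h0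
    (left_mem_Icc.2 hab.le)

end IsBernsteinBasisOf

theorem bernstein_basis_unique_up_to_scalar
    (n : ℕ) (a b : ℝ) (hab : a < b)
    (U : Submodule ℝ (ℝ → ℝ))
    (hUsmooth : ∀ f ∈ U, ContDiff ℝ (n : ℕ∞) f)
    (p r : Fin (n + 1) → ℝ → ℝ)
    (hp : IsBernsteinBasisOf a b n U p)
    (hpnn : ∀ k, ∀ x ∈ Set.Icc a b, 0 ≤ p k x)
    (hr : IsBernsteinBasisOf a b n U r)
    (hrnn : ∀ k, ∀ x ∈ Set.Icc a b, 0 ≤ r k x) :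
    (∀ k, ∃ lam : ℝ, 0 < lam ∧ r k = fun x => lam * p k x) ∧
    ((∀ x ∈ Set.Icc a b, ∑ k, p k x = 1) → (∀ x ∈ Set.Icc a b, ∑ k, r k x = 1) →
      ∀ k, ∀ x ∈ Set.Icc a b, r k x = p k x) := by
  have hscalar := hp.exists_pos_smul_eq hr hUsmooth hab hpnn hrnn
  refine ⟨hscalar, fun hpsum hrsum k x hx => ?_⟩
  choose lam _ hrp using hscalar
  have hdiff : EqOn (∑ i, (lam i - 1) • p i) 0 (Icc a b) := fun y hy => by
    have hr_y : ∀ i, r i y = lam i * p i y := fun i => by rw [hrp i]; rfl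
    simp only [Finset.sum_apply, Pi.smul_apply, smul_eq_mul, sub_mul, one_mul,
      Finset.sum_sub_distrib, ← hr_y, hrsum y hy, hpsum y hy, sub_self, Pi.zero_apply]
  have hlam : lam k - 1 = 0 := congrFun (hp.coeff_eq_zero_of_eqOn_zero hUsmooth hab _ hdiff) k
  rw [hrp k, sub_eq_zero.1 hlam, one_smul]
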